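/- arXiv:1602.06479 — 7 statements merged into one kernel-verified Lean document; each statement's English description precedes it below -/
import Mathlib

section
/- The transformations t_k = μ_k∘μ_k satisfy the braid relations: t_j∘t_k = t_k∘t_j if (e_j,e_k) = 0, and t_j∘t_k∘t_j = t_k∘t_j∘t_k if (e_j,e_k) = ±1. -/
/-! The maps `t_k` are the transvections `x ↦ x + f x • v` with `f = (·, e_k)` and `v = e_k`.
Two transvections `T_{f,u}`, `T_{g,v}` commute when `f v = g u = 0`, and, when `f u = g v = 0`,
expanding both sides of the braid relation on the span of `u, v` leaves the defect
`(1 + f v * g u) • (f x • u - g x • v)`; for an alternating form `f v * g u = -(e_j, e_k)²`. -/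

open Module

namespace LinearMap

section Transvection

variable {R V : Type*}

theorem commute_transvection [CommSemiring R] [AddCommMonoid V] [Module R V]
    {f g : Dual R V} {u v : V} (hf : f v = 0) (hg : g u = 0) :
    Commute (transvection f u) (transvection g v) := by
  ext x
  simp only [Module.End.mul_apply, transvection.apply, map_add, map_smul, hf, hg,
    zero_smul, add_zero]
  abel

theorem transvection_braid [CommRing R] [AddCommGroup V] [Module R V]
    {f g : Dual R V} {u v : V} (hu : f u = 0) (hv : g v = 0) (h : f v * g u = -1) :
    transvection f u * transvection g v * transvection f u =
      transvection g v * transvection f u * transvection g v := by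
  ext x
  simp only [Module.End.mul_apply, transvection.apply, map_add, map_smul, hu, hv]
  linear_combination (norm := module) h • (f x • u - g x • v)

end Transvection

namespace IsAlt

variable {R M : Type*} [CommRing R] [AddCommGroup M] [Module R M]
  {B : M →ₗ[R] M →ₗ[R] R} (hB : B.IsAlt) {u v : M}
include hB

theorem commute_transvection_flip (h : B u v = 0) :
    Commute (transvection (B.flip u) u) (transvection (B.flip v) v) :=
  LinearMap.commute_transvection (by simp [← hB.neg u v, h]) h

theorem transvection_flip_braid (h : B u v = 1 ∨ B u v = -1) :
    transvection (B.flip u) u * transvection (B.flip v) v * transvection (B.flip u) u =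
      transvection (B.flip v) v * transvection (B.flip u) u * transvection (B.flip v) v := by
  refine LinearMap.transvection_braid (hB u) (hB v) ?_
  rw [flip_apply, flip_apply, ← hB.neg u v]
  rcases h with h | h <;> simp [h]

end IsAlt

end LinearMap

/-- The transformations `t_k = μ_k ∘ μ_k`, acting on a lattice `Λ` with skew-symmetric
ℤ-bilinear form by `t_k(x) = x + (x,e_k)·e_k`, satisfy the braid relations:
`t_j ∘ t_k = t_k ∘ t_j` if `(e_j,e_k) = 0`, and
`t_j ∘ t_k ∘ t_j = t_k ∘ t_j ∘ t_k` if `(e_j,e_k) = ±1`. -/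
theorem stmt_6 {I Λ : Type*} [AddCommGroup Λ]
    (form : Λ →ₗ[ℤ] Λ →ₗ[ℤ] ℤ) (hskew : ∀ a b : Λ, form a b = - form b a)
    (e : I → Λ) (t : I → Λ → Λ)
    (ht : ∀ k x, t k x = x + (form x (e k)) • e k) (j k : I) :
    (form (e j) (e k) = 0 → ∀ x, t j (t k x) = t k (t j x)) ∧
    ((form (e j) (e k) = 1 ∨ form (e j) (e k) = -1) →
      ∀ x, t j (t k (t j x)) = t k (t j (t k x))) := by
  have hB : form.IsAlt := fun a => by have := hskew a a; omega
  obtain rfl : t = fun k => ⇑(LinearMap.transvection (form.flip (e k)) (e k)) :=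
    funext fun k => funext (ht k)
  exact ⟨fun h x => LinearMap.congr_fun (hB.commute_transvection_flip h).eq x,
    fun h x => LinearMap.congr_fun (hB.transvection_flip_braid h) x⟩
end

section
/- The C-matrix of a mutation composed with a cluster transformation is given by: if C_σ has rows c_i and ε' is the exchange matrix at the target, then the rows of C_{μ_k∘σ} are c'_k = −c_k and c'_i = c_i + [sgn(c_k)·ε'_{ik}]_+ · c_k for i ≠ k, assuming each row c_k is sign-coherent (all entries of the same sign). -/
namespace Int

theorem neg_mul_min_zero_neg_sign_mul_of_nonneg (e : ℤ) {x : ℤ} (hx : 0 ≤ x) :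
    -(e * min 0 (-e.sign * x)) = max e 0 * x := by
  rcases lt_trichotomy e 0 with he | rfl | he
  · rw [sign_eq_neg_one_of_neg he, min_eq_left (by linarith), max_eq_right he.le]
    ring
  · simp
  · rw [sign_eq_one_of_pos he, min_eq_right (by linarith), max_eq_left he.le]
    ring

theorem neg_mul_min_zero_neg_sign_mul {s x : ℤ} (e : ℤ) (hs : s = 1 ∨ s = -1)
    (hx : 0 ≤ s * x) : -(e * min 0 (-e.sign * x)) = max (s * e) 0 * x := by
  rcases hs with rfl | rfl
  · simpa using neg_mul_min_zero_neg_sign_mul_of_nonneg e (by simpa using hx)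
  · -- for a nonpositive entry, apply the nonnegative case to `-x` and `-e`
    have h := neg_mul_min_zero_neg_sign_mul_of_nonneg (-e) (x := -x) (by simpa using hx)
    simp only [sign_neg, neg_neg, mul_neg, neg_mul] at h
    rw [neg_one_mul, neg_mul]
    linear_combination -h

end Int

/-- Mutation rule for C-matrices.  Let `c` be the C-matrix of a cluster transformation
`σ` (rows `c_i`), `ε'` the exchange matrix at the target, and suppose the row `c_k` is
sign-coherent with common sign `s ∈ {±1}` (with `s = 1` allowed when the row vanishes).
Then the rows of the C-matrix of `μ_k ∘ σ`, given componentwise by the tropical rule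
`c'_{ij} = c_{ij} - ε'_{ik}·min(0, -sgn(ε'_{ik})·c_{kj})` (and `c'_k = -c_k`),
satisfy `c'_k = -c_k` and `c'_i = c_i + [s·ε'_{ik}]₊ · c_k` for `i ≠ k`. -/
theorem stmt_8 {I : Type*} [DecidableEq I]
    (c ε' : I → I → ℤ) (k : I)
    (s : ℤ) (hs : s = 1 ∨ s = -1) (hcoh : ∀ j, 0 ≤ s * c k j)
    (c' : I → I → ℤ)
    (hc' : ∀ i j, c' i j = if i = k then - c k j
      else c i j - ε' i k * min 0 (-(ε' i k).sign * c k j)) :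
    ∀ i j, c' i j = if i = k then - c k j
      else c i j + max (s * ε' i k) 0 * c k j := by
  intro i j
  rw [hc' i j]
  split_ifs
  · rfl
  · rw [sub_eq_add_neg, Int.neg_mul_min_zero_neg_sign_mul _ hs (hcoh j)]
end

section
/- Let D be the N×N matrix with D_{ij} = 0 for j ≠ k, D_{ik} = [−ε_{ik}]_+ for j = k, i ≠ k, and D_{kk} = 2. Then D² = 2D, and consequently (−Id + D)² = Id. -/
theorem Matrix.mul_self_eq_smul_of_eq_zero_of_ne {I R : Type*} [Fintype I] [CommSemiring R]
    {D : Matrix I I R} {k : I} (hD : ∀ i j, j ≠ k → D i j = 0) :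
    D * D = D k k • D := by
  ext i j
  rw [Matrix.mul_apply, Finset.sum_eq_single k (fun m _ hm => by rw [hD i m hm, zero_mul])
    (fun hk => absurd (Finset.mem_univ k) hk), Matrix.smul_apply, smul_eq_mul]
  by_cases hj : j = k
  · rw [hj, mul_comm]
  · rw [hD k j hj, hD i j hj, mul_zero, mul_zero]

theorem neg_one_add_mul_self_eq_one {R : Type*} [Ring R] {x : R} (hx : x * x = 2 • x) :
    (-1 + x) * (-1 + x) = 1 := by
  have : (-1 + x) * (-1 + x) = 1 - 2 • x + x * x := by noncomm_ring
  rw [this, hx, sub_add_cancel]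

theorem stmt_10_general {I : Type*} [Fintype I] [DecidableEq I]
    (ε : I → I → ℤ) (k : I)
    (D : Matrix I I ℤ)
    (hD : ∀ i j, D i j = if j = k then (if i = k then 2 else max (-(ε i k)) 0) else 0) :
    D * D = 2 • D ∧ (-1 + D) * (-1 + D) = 1 := by
  have hsq : D * D = 2 • D := by
    have hkk : D k k = 2 := by simp [hD]
    rw [Matrix.mul_self_eq_smul_of_eq_zero_of_ne (k := k) (fun i j hj => by simp [hD, hj]), hkk]
    exact ofNat_smul_eq_nsmul ℤ 2 D
  exact ⟨hsq, neg_one_add_mul_self_eq_one hsq⟩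

/-- Let `ε` be a skew-symmetric integer matrix and `k` a fixed index.  Let `D` be the
matrix with `D_{ij} = 0` for `j ≠ k`, `D_{ik} = [-ε_{ik}]₊` for `j = k, i ≠ k`, and
`D_{kk} = 2`.  Then `D² = 2D`, and consequently `(-Id + D)² = Id`. -/
theorem stmt_10 {I : Type*} [Fintype I] [DecidableEq I]
    (ε : I → I → ℤ) (hskew : ∀ i j, ε i j = - ε j i) (k : I)
    (D : Matrix I I ℤ)
    (hD : ∀ i j, D i j = if j = k then (if i = k then 2 else max (-(ε i k)) 0) else 0) :
    D * D = 2 • D ∧ (-1 + D) * (-1 + D) = 1 :=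
  stmt_10_general ε k D hD
end

section
/- If σ is a reddening cluster transformation (all entries of C_σ are ≤ 0), then the inverse transformation F(σ) is also reddening, i.e. all entries of C_{F(σ)} = C_σ^{-1} are ≤ 0. (Given: C_{F(σ)}·C_σ = Id and the sign-coherence of C-matrix rows.) -/
theorem Matrix.mul_apply_nonpos_of_row_nonneg_of_col_nonpos {m n o R : Type*} [Fintype n]
    [Semiring R] [PartialOrder R] [IsOrderedRing R] {A : Matrix m n R} {B : Matrix n o R}
    {i : m} {j : o} (hA : ∀ k, 0 ≤ A i k) (hB : ∀ k, B k j ≤ 0) : (A * B) i j ≤ 0 :=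
  Finset.sum_nonpos fun k _ => mul_nonpos_of_nonneg_of_nonpos (hA k) (hB k)

/-- If `σ` is a reddening cluster transformation (all entries of its C-matrix `C` are
`≤ 0`), then the contravariant dual `F(σ)` is also reddening: its C-matrix `D`, which
satisfies `D·C = Id` (Nakanishi–Zelevinsky) and whose rows are sign-coherent, has all
entries `≤ 0`. -/
theorem stmt_11 {I : Type*} [Fintype I] [DecidableEq I]
    (C D : Matrix I I ℤ) (hDC : D * C = 1)
    (hC : ∀ i j, C i j ≤ 0)
    (hcoh : ∀ i, (∀ j, 0 ≤ D i j) ∨ (∀ j, D i j ≤ 0)) :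
    ∀ i j, D i j ≤ 0 := by
  intro i j
  rcases hcoh i with hrow_nonneg | hrow_nonpos
  · -- a nonnegative row would make the diagonal entry `(D * C) i i = 1` nonpositive
    have hdiag : (D * C) i i ≤ 0 :=
      Matrix.mul_apply_nonpos_of_row_nonneg_of_col_nonpos hrow_nonneg fun k => hC k i
    simp [hDC] at hdiag
  · exact hrow_nonpos j
end

section
/- Let C be an invertible integer N×N matrix with all entries nonpositive, and let D = C^{-1} have sign-coherent rows (each row all ≥ 0 or all ≤ 0). Then there exists a unique permutation π of {1,…,N} such that for each i, the i-th row of D is −e_{π(i)} and the π(i)-th row of C is −e_i; in particular the matrix obtained from C by permuting rows via π is −Id. -/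
/-!
Sign-coherence forces every row of `D` to be nonpositive, since a nonnegative row `i` would
give `(D * C) i i ≤ 0`. Then `A = -D` and `B = -C` are nonnegative integer matrices with
`A * B = 1`. Pick `k = f i` with `A i k ≠ 0`. The off-diagonal entries `(A * B) i j` are sums of
nonnegative terms, so they kill row `k` of `B` outside column `i`, and then `(B * A) k = e_k`
reads `B k i • (row i of A) = e_k`. Over `ℤ` this forces `B k i = A i k = 1`, so `A` and `B` are
mutually inverse permutation matrices.
-/

namespace Matrix

variable {I : Type*} [Fintype I] [DecidableEq I]

theorem row_nonpos_of_mul_eq_one {C D : Matrix I I ℤ} (hDC : D * C = 1)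
    (hC : ∀ i j, C i j ≤ 0) {i : I} (hcoh : (∀ j, 0 ≤ D i j) ∨ (∀ j, D i j ≤ 0)) :
    ∀ j, D i j ≤ 0 := by
  refine hcoh.resolve_left fun hD => ?_
  have hdiag : ∑ k, D i k * C k i = 1 := by rw [← mul_apply, hDC, one_apply_eq]
  have : ∑ k, D i k * C k i ≤ 0 :=
    Finset.sum_nonpos fun k _ => mul_nonpos_of_nonneg_of_nonpos (hD k) (hC k i)
  omega

theorem exists_ne_zero_of_mul_eq_one {R : Type*} [NonAssocSemiring R] [Nontrivial R]
    {A B : Matrix I I R} (hAB : A * B = 1) (i : I) : ∃ k, A i k ≠ 0 := by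
  by_contra! h
  have hdiag : (A * B) i i = 1 := by rw [hAB, one_apply_eq]
  simp [mul_apply, h] at hdiag

section Nonneg

variable {A B : Matrix I I ℤ} (hA : ∀ i j, 0 ≤ A i j) (hB : ∀ i j, 0 ≤ B i j)
  (hAB : A * B = 1)
include hA hB hAB

theorem eq_zero_of_nonneg_mul_eq_one {i k j : I} (hik : A i k ≠ 0) (hji : j ≠ i) :
    B k j = 0 := by
  have hoff : ∑ l, A i l * B l j = 0 := by rw [← mul_apply, hAB, one_apply_ne hji.symm]
  have := (Finset.sum_eq_zero_iff_of_nonneg fun l _ => mul_nonneg (hA i l) (hB l j)).mp hoff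
    k (Finset.mem_univ k)
  exact (mul_eq_zero.mp this).resolve_left hik

theorem exists_rows_eq_single_of_nonneg_mul_eq_one :
    ∃ f : I → I, (∀ i j, A i j = if j = f i then 1 else 0) ∧
      (∀ i j, B (f i) j = if j = i then 1 else 0) := by
  choose f hAf using exists_ne_zero_of_mul_eq_one hAB
  have hBA : B * A = 1 := mul_eq_one_comm.mp hAB
  have hBrow : ∀ i j, j ≠ i → B (f i) j = 0 := fun i j hji =>
    eq_zero_of_nonneg_mul_eq_one hA hB hAB (hAf i) hji
  -- only the `l = i` term of `(B * A) (f i) j` survives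
  have hscaled : ∀ i j, B (f i) i * A i j = if f i = j then 1 else 0 := by
    intro i j
    rw [← one_apply, ← hBA, mul_apply,
      Finset.sum_eq_single i (fun l _ hl => by rw [hBrow i l hl, zero_mul]) (by simp)]
  have hunit : ∀ i, B (f i) i = 1 ∧ A i (f i) = 1 := fun i => by
    have h := hscaled i (f i)
    rw [if_pos rfl] at h
    rcases Int.mul_eq_one_iff_eq_one_or_neg_one.mp h with h1 | ⟨h1, -⟩
    · exact h1
    · exact absurd (hB (f i) i) (by omega)
  refine ⟨f, fun i j => ?_, fun i j => ?_⟩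
  · have h := hscaled i j
    rw [(hunit i).1, one_mul] at h
    rw [h]
    exact if_congr eq_comm rfl rfl
  · split_ifs with hji
    · exact hji ▸ (hunit j).1
    · exact hBrow i j hji

end Nonneg

end Matrix

open Matrix in
/-- Let `C` be an invertible integer matrix with all entries nonpositive, and let
`D = C⁻¹` (so `D·C = Id`) have sign-coherent rows.  Then there is a unique permutation
`π` such that for each `i` the `i`-th row of `D` is `-e_{π(i)}` and the `π(i)`-th row of
`C` is `-e_i`; in particular, permuting the rows of `C` by `π` yields `-Id`. -/
theorem stmt_12 {I : Type*} [Fintype I] [DecidableEq I]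
    (C D : Matrix I I ℤ) (hDC : D * C = 1)
    (hC : ∀ i j, C i j ≤ 0)
    (hcoh : ∀ i, (∀ j, 0 ≤ D i j) ∨ (∀ j, D i j ≤ 0)) :
    ∃! π : Equiv.Perm I,
      (∀ i j, D i j = if j = π i then -1 else 0) ∧
      (∀ i j, C (π i) j = if j = i then -1 else 0) ∧
      C.submatrix (⇑π) id = -1 := by
  have hD i j : 0 ≤ (-D) i j := neg_nonneg.mpr (row_nonpos_of_mul_eq_one hDC hC (hcoh i) j)
  have hC' i j : 0 ≤ (-C) i j := neg_nonneg.mpr (hC i j)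
  obtain ⟨f, hDf, hCf⟩ :=
    exists_rows_eq_single_of_nonneg_mul_eq_one hD hC' (by rw [neg_mul_neg, hDC])
  have hDrow i j : D i j = if j = f i then -1 else 0 := by
    rw [← neg_neg (D i j), ← neg_apply, hDf]; split_ifs <;> simp
  have hCrow i j : C (f i) j = if j = i then -1 else 0 := by
    rw [← neg_neg (C (f i) j), ← neg_apply, hCf]; split_ifs <;> simp
  have hf : Function.Injective f := fun a b hab => by
    by_contra hne
    have h := hCrow a b
    rw [hab, hCrow b b] at h
    simp [Ne.symm hne] at h
  refine ⟨Equiv.ofBijective f hf.bijective_of_finite, ⟨hDrow, hCrow, ?_⟩, ?_⟩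
  · ext i j
    simp only [submatrix_apply, Equiv.ofBijective_apply, id, hCrow, neg_apply, Matrix.one_apply]
    split_ifs <;> simp_all
  · rintro π ⟨hπ, -, -⟩
    ext i
    simpa [hDrow, eq_comm] using hπ i (f i)
end

section
/- Let C be an invertible integer N×N matrix with all entries nonnegative, such that the rows of C^{-1} are sign-coherent. Then C is a permutation matrix. -/
/-!
Since `(D * C) i i = 1` and `C ≥ 0`, no row of `D` can be nonpositive, so sign-coherence
forces `D ≥ 0`. A pair of mutually inverse nonnegative matrices is monomial: in
`1 = ∑ₖ C i k * D k i` some term `C i j * D j i` is positive, and then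
`0 = (D * C) j j' ≥ D j i * C i j'` kills every other entry of row `i` of `C`; invertibility
makes `i ↦ j` injective. Over `ℤ` the surviving entry divides `1`, hence equals `1`.
-/

namespace Matrix

variable {I R : Type*} [Fintype I] [DecidableEq I]

theorem sum_mul_apply_eq_ite_of_mul_eq_one [NonAssocSemiring R] {C D : Matrix I I R}
    (hDC : D * C = 1) (i j : I) : ∑ k, D i k * C k j = if i = j then 1 else 0 := by
  simpa [mul_apply, one_apply] using congrFun (congrFun hDC i) j

variable [Ring R] [LinearOrder R] [IsStrictOrderedRing R]

theorem nonneg_of_mul_eq_one_of_signCoherent {C D : Matrix I I R} (hDC : D * C = 1)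
    (hC : ∀ i j, 0 ≤ C i j) (hcoh : ∀ i, (∀ j, 0 ≤ D i j) ∨ (∀ j, D i j ≤ 0)) (i j : I) :
    0 ≤ D i j := by
  rcases hcoh i with hnonneg | hnonpos
  · exact hnonneg j
  · have hdiag : ∑ k, D i k * C k i = 1 := by
      simpa using sum_mul_apply_eq_ite_of_mul_eq_one hDC i i
    have : ∑ k, D i k * C k i ≤ 0 :=
      Finset.sum_nonpos fun k _ => mul_nonpos_of_nonpos_of_nonneg (hnonpos k) (hC k i)
    exact absurd (hdiag ▸ this) (not_le.mpr one_pos)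

section NonnegInverse

variable {C D : Matrix I I R} (hCD : C * D = 1) (hDC : D * C = 1)
  (hC : ∀ i j, 0 ≤ C i j) (hD : ∀ i j, 0 ≤ D i j)
include hCD hDC hC hD

theorem exists_mul_apply_eq_one_of_nonneg_inverse (i : I) :
    ∃ j, C i j * D j i = 1 ∧ ∀ j', j' ≠ j → C i j' = 0 := by
  have hdiag : ∑ k, C i k * D k i = 1 := by
    simpa using sum_mul_apply_eq_ite_of_mul_eq_one hCD i i
  obtain ⟨j, -, hpos⟩ : ∃ j ∈ Finset.univ, 0 < C i j * D j i := by
    by_contra! h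
    exact (zero_lt_one' R).not_ge (hdiag ▸ Finset.sum_nonpos h)
  have hDji : 0 < D j i := pos_of_mul_pos_right hpos (hC i j)
  have hrow : ∀ j', j' ≠ j → C i j' = 0 := by
    intro j' hj'
    have hoff : ∑ k, D j k * C k j' = 0 := by
      simpa [hj'.symm] using sum_mul_apply_eq_ite_of_mul_eq_one hDC j j'
    have : D j i * C i j' ≤ 0 := hoff ▸ Finset.single_le_sum (f := fun k => D j k * C k j')
      (fun k _ => mul_nonneg (hD j k) (hC k j')) (Finset.mem_univ i)
    exact le_antisymm (nonpos_of_mul_nonpos_right this hDji) (hC i j')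
  refine ⟨j, ?_, hrow⟩
  rwa [Finset.sum_eq_single j (fun k _ hk => by rw [hrow k hk, zero_mul]) (by simp)] at hdiag

theorem exists_perm_of_nonneg_inverse :
    ∃ π : Equiv.Perm I, (∀ i, C i (π i) * D (π i) i = 1) ∧ ∀ i j, j ≠ π i → C i j = 0 := by
  choose f hunit hrow using exists_mul_apply_eq_one_of_nonneg_inverse hCD hDC hC hD
  have hinj : Function.Injective f := by
    intro i i' hff
    by_contra hne
    have hoff : ∑ k, C i k * D k i' = 0 := by
      simpa [hne] using sum_mul_apply_eq_ite_of_mul_eq_one hCD i i'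
    rw [Finset.sum_eq_single (f i) (fun k _ hk => by rw [hrow i k hk, zero_mul]) (by simp)] at hoff
    have hDzero : D (f i') i' = 0 :=
      hff ▸ (mul_eq_zero.mp hoff).resolve_left (left_ne_zero_of_mul_eq_one (hunit i))
    simpa [hDzero] using hunit i'
  exact ⟨Equiv.ofBijective f hinj.bijective_of_finite, hunit, hrow⟩

end NonnegInverse

end Matrix

/-- Let `C` be an invertible integer matrix with all entries nonnegative, such that the
rows of `C⁻¹` (the matrix `D` with `D·C = Id`) are sign-coherent.  Then `C` is a
permutation matrix. -/
theorem stmt_13 {I : Type*} [Fintype I] [DecidableEq I]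
    (C D : Matrix I I ℤ) (hDC : D * C = 1)
    (hC : ∀ i j, 0 ≤ C i j)
    (hcoh : ∀ i, (∀ j, 0 ≤ D i j) ∨ (∀ j, D i j ≤ 0)) :
    ∃ π : Equiv.Perm I, ∀ i j, C i j = if π i = j then 1 else 0 := by
  have hD := Matrix.nonneg_of_mul_eq_one_of_signCoherent hDC hC hcoh
  obtain ⟨π, hunit, hrow⟩ :=
    Matrix.exists_perm_of_nonneg_inverse (mul_eq_one_comm.mp hDC) hDC hC hD
  refine ⟨π, fun i j => ?_⟩
  split_ifs with hj
  · exact hj ▸ Int.eq_one_of_mul_eq_one_right (hC i (π i)) (hunit i)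
  · exact hrow i j (Ne.symm hj)
end

section
/- For a triple of complete flags (F•, G•, H•) in a 3-dimensional vector space V in generic position, the triple ratio r₃⁺(F•,G•,H•) = (⟨f₁∧g₂,ω⟩⟨g₁∧h₂,ω⟩⟨h₁∧f₂,ω⟩)/(⟨f₁∧h₂,ω⟩⟨g₁∧f₂,ω⟩⟨h₁∧g₂,ω⟩) equals the cross-ratio r⁺(L₁,L₂,L₃,L₄) of the four lines L₁=F₁, L₂=G₂∩F₂, L₃=(G₁⊕H₁)∩F₂, L₄=H₂∩F₂ inside the plane F₂. -/
/-!
Write `l₁ = a f₁`, `l₂ = b₁ g₁ + b₂ g₂`, `l₃ = c₁ g₁ + c₂ h₁`, `l₄ = d₁ h₁ + d₂ h₂`.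
On the plane `F₂ = ⟨f₁, f₂⟩` all the area forms `ω(w, ·, ·)` are proportional, with factor
`ω(w, f₁, f₂)`, so each pairing `ω(u, lᵢ, lⱼ)` may be evaluated at a flag vector common to `lᵢ`
and `lⱼ` (`g₁` for `l₁, l₂` and `l₂, l₃`, `h₁` for `l₃, l₄` and `l₁, l₄`). There it becomes a
coefficient times one of the six determinants of the triple ratio. In the cross-ratio all
coefficients cancel except `c₁ / c₂`, which equals `-ω(h₁, f₁, f₂) / ω(g₁, f₁, f₂)` because
`l₃ ∈ F₂`.
-/

namespace AlternatingMap

variable {R M : Type*} [CommRing R] [AddCommGroup M] [Module R M] (ω : M [⋀^Fin 3]→ₗ[R] R)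

theorem map_vec3_add_fst (x y v w : M) : ω ![x + y, v, w] = ω ![x, v, w] + ω ![y, v, w] :=
  ω.map_vecCons_add _ x y

theorem map_vec3_smul_fst (a : R) (x v w : M) : ω ![a • x, v, w] = a * ω ![x, v, w] :=
  ω.map_vecCons_smul _ a x

theorem map_vec3_add_snd (w x y v : M) : ω ![w, x + y, v] = ω ![w, x, v] + ω ![w, y, v] :=
  (ω.curryLeft w).map_vecCons_add _ x y

theorem map_vec3_smul_snd (a : R) (w x v : M) : ω ![w, a • x, v] = a * ω ![w, x, v] :=
  (ω.curryLeft w).map_vecCons_smul _ a x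

theorem map_vec3_add_thd (w v x y : M) : ω ![w, v, x + y] = ω ![w, v, x] + ω ![w, v, y] :=
  ((ω.curryLeft w).curryLeft v).map_vecCons_add _ x y

theorem map_vec3_smul_thd (a : R) (w v x : M) : ω ![w, v, a • x] = a * ω ![w, v, x] :=
  ((ω.curryLeft w).curryLeft v).map_vecCons_smul _ a x

theorem map_vec3_self_fst_snd (x w : M) : ω ![x, x, w] = 0 :=
  ω.map_eq_zero_of_eq _ (i := 0) (j := 1) rfl (by decide)

theorem map_vec3_self_fst_thd (x w : M) : ω ![x, w, x] = 0 :=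
  ω.map_eq_zero_of_eq _ (i := 0) (j := 2) rfl (by decide)

theorem map_vec3_self_snd_thd (w x : M) : ω ![w, x, x] = 0 :=
  ω.map_eq_zero_of_eq _ (i := 1) (j := 2) rfl (by decide)

theorem map_vec3_swap_fst_snd (x y z : M) : ω ![y, x, z] = -ω ![x, y, z] := by
  have h := ω.map_vec3_self_fst_snd (x + y) z
  rw [map_vec3_add_fst, map_vec3_add_snd, map_vec3_add_snd, map_vec3_self_fst_snd,
    map_vec3_self_fst_snd] at h
  linear_combination h

theorem map_vec3_swap_snd_thd (x y z : M) : ω ![x, z, y] = -ω ![x, y, z] := by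
  have h := ω.map_vec3_self_snd_thd x (y + z)
  rw [map_vec3_add_snd, map_vec3_add_thd, map_vec3_add_thd, map_vec3_self_snd_thd,
    map_vec3_self_snd_thd] at h
  linear_combination h

theorem map_vec3_smul_add_smul_self_thd (s t : R) (w x y : M) :
    ω ![w, x, s • w + t • y] = t * ω ![w, x, y] := by
  rw [map_vec3_add_thd, map_vec3_smul_thd, map_vec3_smul_thd, map_vec3_self_fst_thd, mul_zero,
    zero_add]

theorem map_vec3_smul_self_add_smul_snd (s t : R) (w x y : M) :
    ω ![w, s • w + t • x, y] = t * ω ![w, x, y] := by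
  rw [map_vec3_add_snd, map_vec3_smul_snd, map_vec3_smul_snd, map_vec3_self_fst_snd, mul_zero,
    zero_add]

theorem map_vec3_smul_add_smul_self_snd (s t : R) (w x y : M) :
    ω ![w, s • x + t • w, y] = s * ω ![w, x, y] := by
  rw [map_vec3_add_snd, map_vec3_smul_snd, map_vec3_smul_snd, map_vec3_self_fst_snd, mul_zero,
    add_zero]

theorem map_vec3_smul_add_smul_eq_det_mul (a b c d : R) (w f₁ f₂ : M) :
    ω ![w, a • f₁ + b • f₂, c • f₁ + d • f₂] = (a * d - b * c) * ω ![w, f₁, f₂] := by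
  simp only [map_vec3_add_snd, map_vec3_add_thd, map_vec3_smul_snd, map_vec3_smul_thd,
    map_vec3_self_snd_thd]
  linear_combination (b * c) * ω.map_vec3_swap_snd_thd w f₁ f₂

variable {f₁ f₂ : M}

theorem map_vec3_eq_zero_of_mem_span_pair {x : M} (hx : x ∈ Submodule.span R {f₁, f₂}) :
    ω ![x, f₁, f₂] = 0 := by
  obtain ⟨a, b, rfl⟩ := Submodule.mem_span_pair.mp hx
  rw [map_vec3_add_fst, map_vec3_smul_fst, map_vec3_smul_fst, map_vec3_self_fst_snd,
    map_vec3_self_fst_thd, mul_zero, mul_zero, add_zero]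

theorem map_vec3_mul_eq_mul_of_mem_span_pair {x y : M} (hx : x ∈ Submodule.span R {f₁, f₂})
    (hy : y ∈ Submodule.span R {f₁, f₂}) (u w : M) :
    ω ![w, x, y] * ω ![u, f₁, f₂] = ω ![u, x, y] * ω ![w, f₁, f₂] := by
  obtain ⟨a, b, rfl⟩ := Submodule.mem_span_pair.mp hx
  obtain ⟨c, d, rfl⟩ := Submodule.mem_span_pair.mp hy
  rw [map_vec3_smul_add_smul_eq_det_mul, map_vec3_smul_add_smul_eq_det_mul]
  ring

end AlternatingMap

theorem stmt_15_general {F V : Type*} [Field F] [AddCommGroup V] [Module F V]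
    (ω : AlternatingMap F V F (Fin 3))
    (f₁ f₂ g₁ g₂ h₁ h₂ : V)
    (hn3 : ω ![h₁, f₁, f₂] ≠ 0)
    (hd1 : ω ![f₁, h₁, h₂] ≠ 0) (hd2 : ω ![g₁, f₁, f₂] ≠ 0) (hd3 : ω ![h₁, g₁, g₂] ≠ 0)
    (l₁ l₂ l₃ l₄ u : V)
    (hl₁ : l₁ ∈ Submodule.span F ({f₁} : Set V))
    (hl₂ : l₂ ∈ Submodule.span F ({g₁, g₂} : Set V) ⊓ Submodule.span F ({f₁, f₂} : Set V))
    (hl₃ : l₃ ∈ (Submodule.span F ({g₁} : Set V) ⊔ Submodule.span F ({h₁} : Set V)) ⊓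
      Submodule.span F ({f₁, f₂} : Set V))
    (hl₄ : l₄ ∈ Submodule.span F ({h₁, h₂} : Set V) ⊓ Submodule.span F ({f₁, f₂} : Set V))
    (hden1 : ω ![u, l₁, l₄] ≠ 0) (hden2 : ω ![u, l₂, l₃] ≠ 0) :
    (ω ![f₁, g₁, g₂] * ω ![g₁, h₁, h₂] * ω ![h₁, f₁, f₂]) /
      (ω ![f₁, h₁, h₂] * ω ![g₁, f₁, f₂] * ω ![h₁, g₁, g₂])
    = (ω ![u, l₁, l₂] * ω ![u, l₃, l₄]) / (ω ![u, l₁, l₄] * ω ![u, l₂, l₃]) := by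
  obtain ⟨a, rfl⟩ := Submodule.mem_span_singleton.mp hl₁
  obtain ⟨b₁, b₂, rfl⟩ := Submodule.mem_span_pair.mp hl₂.1
  obtain ⟨_, hc₁, _, hc₂, rfl⟩ := Submodule.mem_sup.mp hl₃.1
  obtain ⟨c₁, rfl⟩ := Submodule.mem_span_singleton.mp hc₁
  obtain ⟨c₂, rfl⟩ := Submodule.mem_span_singleton.mp hc₂
  obtain ⟨d₁, d₂, rfl⟩ := Submodule.mem_span_pair.mp hl₄.1
  have hl₁F : a • f₁ ∈ Submodule.span F {f₁, f₂} := Submodule.mem_span_pair.mpr ⟨a, 0, by simp⟩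
  have h12 := ω.map_vec3_mul_eq_mul_of_mem_span_pair hl₁F hl₂.2 u g₁
  rw [ω.map_vec3_smul_add_smul_self_thd, ω.map_vec3_smul_snd,
    ω.map_vec3_swap_fst_snd f₁ g₁ g₂] at h12
  have h23 := ω.map_vec3_mul_eq_mul_of_mem_span_pair hl₂.2 hl₃.2 u g₁
  rw [ω.map_vec3_smul_self_add_smul_snd, ω.map_vec3_smul_add_smul_self_thd,
    ω.map_vec3_swap_snd_thd g₁ h₁ g₂, ω.map_vec3_swap_fst_snd h₁ g₁ g₂, neg_neg] at h23
  have h34 := ω.map_vec3_mul_eq_mul_of_mem_span_pair hl₃.2 hl₄.2 u h₁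
  rw [ω.map_vec3_smul_add_smul_self_snd, ω.map_vec3_smul_add_smul_self_thd,
    ω.map_vec3_swap_fst_snd g₁ h₁ h₂] at h34
  have h14 := ω.map_vec3_mul_eq_mul_of_mem_span_pair hl₁F hl₄.2 u h₁
  rw [ω.map_vec3_smul_add_smul_self_thd, ω.map_vec3_smul_snd,
    ω.map_vec3_swap_fst_snd f₁ h₁ h₂] at h14
  have rel := ω.map_vec3_eq_zero_of_mem_span_pair hl₃.2
  rw [ω.map_vec3_add_fst, ω.map_vec3_smul_fst, ω.map_vec3_smul_fst] at rel
  set N₁ := ω ![f₁, g₁, g₂]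
  set N₂ := ω ![g₁, h₁, h₂]
  set N₃ := ω ![h₁, f₁, f₂]
  set D₁ := ω ![f₁, h₁, h₂]
  set D₂ := ω ![g₁, f₁, f₂]
  set D₃ := ω ![h₁, g₁, g₂]
  set Δ := ω ![u, f₁, f₂]
  rw [div_eq_div_iff (mul_ne_zero (mul_ne_zero hd1 hd2) hd3) (mul_ne_zero hden1 hden2)]
  apply mul_right_cancel₀ (mul_ne_zero hn3 hd2)
  linear_combination -N₁ * N₂ * N₃ ^ 2 * ω ![u, a • f₁, d₁ • h₁ + d₂ • h₂] * h23
    - N₁ * N₂ * N₃ * (b₂ * (c₂ * D₃) * Δ) * h14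
    + D₁ * D₂ ^ 2 * D₃ * ω ![u, a • f₁, b₁ • g₁ + b₂ • g₂] * h34
    + D₁ * D₂ * D₃ * (c₁ * (d₂ * -N₂) * Δ) * h12
    - a * b₂ * d₂ * N₁ * N₂ * D₁ * D₃ * Δ ^ 2 * rel

/-- For a generic triple of complete flags `(F•, G•, H•)` in a 3-dimensional vector space
`V` with volume form `ω`, presented by vectors `F₁ = ⟨f₁⟩ ⊂ F₂ = ⟨f₁,f₂⟩`, etc., the
triple ratio
`r₃⁺ = (⟨f₁∧g₂,ω⟩⟨g₁∧h₂,ω⟩⟨h₁∧f₂,ω⟩) / (⟨f₁∧h₂,ω⟩⟨g₁∧f₂,ω⟩⟨h₁∧g₂,ω⟩)`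
(with the decoration of each 2-plane given by the wedge of its two spanning vectors)
equals the cross-ratio `r⁺(L₁,L₂,L₃,L₄)` of the four lines
`L₁ = F₁`, `L₂ = G₂ ∩ F₂`, `L₃ = (G₁ ⊕ H₁) ∩ F₂`, `L₄ = H₂ ∩ F₂` inside the plane `F₂`,
computed with respect to any volume form on `F₂` (obtained as `Δ(a∧b) = ω(u,a,b)` for any
vector `u ∉ F₂`). -/
theorem stmt_15 {F V : Type*} [Field F] [AddCommGroup V] [Module F V]
    (hdim : Module.finrank F V = 3)
    (ω : AlternatingMap F V F (Fin 3))
    (f₁ f₂ g₁ g₂ h₁ h₂ : V)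
    (hf : LinearIndependent F ![f₁, f₂])
    (hg : LinearIndependent F ![g₁, g₂])
    (hh : LinearIndependent F ![h₁, h₂])
    (hn1 : ω ![f₁, g₁, g₂] ≠ 0) (hn2 : ω ![g₁, h₁, h₂] ≠ 0) (hn3 : ω ![h₁, f₁, f₂] ≠ 0)
    (hd1 : ω ![f₁, h₁, h₂] ≠ 0) (hd2 : ω ![g₁, f₁, f₂] ≠ 0) (hd3 : ω ![h₁, g₁, g₂] ≠ 0)
    (l₁ l₂ l₃ l₄ u : V)
    (hl₁ : l₁ ∈ Submodule.span F ({f₁} : Set V))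
    (hl₂ : l₂ ∈ Submodule.span F ({g₁, g₂} : Set V) ⊓ Submodule.span F ({f₁, f₂} : Set V))
    (hl₃ : l₃ ∈ (Submodule.span F ({g₁} : Set V) ⊔ Submodule.span F ({h₁} : Set V)) ⊓
      Submodule.span F ({f₁, f₂} : Set V))
    (hl₄ : l₄ ∈ Submodule.span F ({h₁, h₂} : Set V) ⊓ Submodule.span F ({f₁, f₂} : Set V))
    (hl₁0 : l₁ ≠ 0) (hl₂0 : l₂ ≠ 0) (hl₃0 : l₃ ≠ 0) (hl₄0 : l₄ ≠ 0)
    (hu : u ∉ Submodule.span F ({f₁, f₂} : Set V))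
    (hden1 : ω ![u, l₁, l₄] ≠ 0) (hden2 : ω ![u, l₂, l₃] ≠ 0) :
    (ω ![f₁, g₁, g₂] * ω ![g₁, h₁, h₂] * ω ![h₁, f₁, f₂]) /
      (ω ![f₁, h₁, h₂] * ω ![g₁, f₁, f₂] * ω ![h₁, g₁, g₂])
    = (ω ![u, l₁, l₂] * ω ![u, l₃, l₄]) / (ω ![u, l₁, l₄] * ω ![u, l₂, l₃]) :=
  stmt_15_general ω f₁ f₂ g₁ g₂ h₁ h₂ hn3 hd1 hd2 hd3 l₁ l₂ l₃ l₄ u hl₁ hl₂ hl₃ hl₄ hden1 hden2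
end
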